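/- Define f : [0,1] → ℓ²(ℕ²) by f(t) = Σ_{k≥1} 2^{-k} e_{k, ⌊2^k t⌋}. For every finite-dimensional subspace V of ℓ²(ℕ²) and every ε > 0, there exists a Borel set K ⊆ [0,1] with Lebesgue measure λ([0,1] \ K) ≤ ε such that the restriction of π_V ∘ f to K is piecewise ε-Lipschitz (i.e., [0,1] decomposes into finitely many intervals on each of which π_V ∘ f restricted to K is ε-Lipschitz). -/

import Mathlib

open MeasureTheory Set
open scoped ENNReal NNReal

noncomputable section

/-- The Hilbert space `ℓ²(ℕ²)` (with basis vectors `e_{k,i} = lp.single 2 (k, i) 1`). -/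
abbrev Ell2 : Type := lp (fun _ : ℕ × ℕ => ℝ) 2

/-- The map `f : [0,1] → ℓ²(ℕ²)`, `f(t) = Σ_{k ≥ 1} 2^{-k} e_{k, ⌊2^k t⌋}`. -/
def necklaceMap (t : ℝ) : Ell2 :=
  ∑' k : ℕ, ((2 : ℝ) ^ (k + 1))⁻¹ •
    lp.single 2 ((k + 1 : ℕ), ⌊(2 : ℝ) ^ (k + 1) * t⌋₊) (1 : ℝ)

/-!
By the trace formula, `∑ᵢ ‖π_V e_{l,i}‖² ≤ dim V`, so at level `l` at most `dim V · 2^{3l/4}` of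
the cells `[i/2^l, (i+1)/2^l)` are bad, i.e. have `‖π_V e_{l,i}‖ > 2^{-3l/8}`, and they have total
length at most `dim V · 2^{-l/4}`. Remove them for all `l ≥ N`, together with the
`2^{-9l/8}`-neighbourhoods of the level-`l` dyadic points. For remaining points `s ≤ x` of one
level-`N` cell, the level-`l` summand of `π_V f x - π_V f s` vanishes unless the level-`l` digits
of `s` and `x` differ, which forces `l > N` and `x - s > 2 · 2^{-9l/8}`; as both level-`l` cells
are good, that summand is at most `2^{-l} · 2 · 2^{-3l/8} ≤ 2^{-l/4} (x - s)`. Summing over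
`l > N`, `π_V ∘ f` is `O(2^{-N/8})`-Lipschitz on each level-`N` cell, and the removed set has
measure `O(2^{-N/8})`.
-/

open scoped InnerProductSpace
open Finset

theorem Submodule.sum_norm_sq_starProjection_le {𝕜 E ι : Type*} [RCLike 𝕜] [NormedAddCommGroup E]
    [InnerProductSpace 𝕜 E] (V : Submodule 𝕜 E) [FiniteDimensional 𝕜 V] {v : ι → E}
    (hv : Orthonormal 𝕜 v) (s : Finset ι) :
    ∑ i ∈ s, ‖V.starProjection (v i)‖ ^ 2 ≤ Module.finrank 𝕜 V := by
  let b := stdOrthonormalBasis 𝕜 V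
  have hproj (x : E) : ‖V.starProjection x‖ ^ 2 = ∑ j, ‖⟪x, (b j : E)⟫_𝕜‖ ^ 2 := by
    rw [V.starProjection_apply, V.norm_coe, ← b.sum_sq_norm_inner_left]
    simp only [V.inner_orthogonalProjectionOnto_eq_of_mem_right]
  calc ∑ i ∈ s, ‖V.starProjection (v i)‖ ^ 2
      = ∑ j, ∑ i ∈ s, ‖⟪v i, (b j : E)⟫_𝕜‖ ^ 2 := by simp_rw [hproj]; exact Finset.sum_comm
    _ ≤ ∑ j, ‖(b j : E)‖ ^ 2 := Finset.sum_le_sum fun j _ => hv.sum_inner_products_le _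
    _ = Module.finrank 𝕜 V := by simp [V.norm_coe, b.orthonormal.1 _]

theorem lp.orthonormal_single {ι 𝕜 : Type*} [RCLike 𝕜] [DecidableEq ι] :
    Orthonormal 𝕜 fun i : ι => lp.single 2 i (1 : 𝕜) := by
  rw [orthonormal_iff_ite]
  intro i j
  rw [lp.inner_single_left, lp.single_apply, Pi.single_apply]
  simp

theorem MeasureTheory.measure_biUnion_finset_le_card_mul {α ι : Type*} [MeasurableSpace α]
    {μ : Measure α} (s : Finset ι) (A : ι → Set α) {c : ℝ}
    (hc : ∀ i ∈ s, μ (A i) ≤ ENNReal.ofReal c) :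
    μ (⋃ i ∈ s, A i) ≤ ENNReal.ofReal (#s * c) := by
  rw [ENNReal.ofReal_mul (Nat.cast_nonneg _), ENNReal.ofReal_natCast, ← nsmul_eq_mul]
  exact (measure_biUnion_finset_le s A).trans (sum_le_card_nsmul s _ _ hc)

theorem Nat.floor_two_pow_mul_eq_div {K : Type*} [Field K] [LinearOrder K] [IsStrictOrderedRing K]
    [FloorSemiring K] {l N : ℕ} (hl : l ≤ N) (y : K) :
    ⌊(2 : K) ^ l * y⌋₊ = ⌊(2 : K) ^ N * y⌋₊ / 2 ^ (N - l) := by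
  rw [← Nat.floor_div_natCast]
  congr 1
  rw [Nat.cast_pow, Nat.cast_ofNat, ← Nat.sub_add_cancel hl, pow_add, Nat.add_sub_cancel]
  field_simp

namespace Necklace

/-- All scales of the construction are integral powers of `ρ`. -/
def ρ : ℝ := 2 ^ (-(8 : ℝ)⁻¹)

lemma ρ_pos : 0 < ρ := by unfold ρ; positivity

lemma ρ_lt_one : ρ < 1 := Real.rpow_lt_one_of_one_lt_of_neg (by norm_num) (by norm_num)

lemma ρ_pow_eight_mul (l : ℕ) : ρ ^ (8 * l) = ((2 : ℝ) ^ l)⁻¹ := by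
  have : ρ ^ 8 = 2⁻¹ := by
    rw [ρ, ← Real.rpow_natCast, ← Real.rpow_mul (by norm_num)]
    norm_num [Real.rpow_neg_one]
  rw [pow_mul, this, inv_pow]

abbrev e (l i : ℕ) : Ell2 := lp.single 2 (l, i) 1

def term (t : ℝ) (k : ℕ) : Ell2 := ((2 : ℝ) ^ (k + 1))⁻¹ • e (k + 1) ⌊(2 : ℝ) ^ (k + 1) * t⌋₊

lemma summable_term (t : ℝ) : Summable (term t) := by
  refine Summable.of_norm_bounded (summable_geometric_two.mul_left 2⁻¹) fun k => ?_
  simp [term, norm_smul, lp.norm_single, pow_succ]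

lemma necklaceMap_eq_tsum (t : ℝ) : necklaceMap t = ∑' k, term t k := rfl

variable (V : Submodule ℝ Ell2) [FiniteDimensional ℝ V]

def badCells (l : ℕ) : Finset ℕ := {i ∈ range (2 ^ l) | ρ ^ (3 * l) < ‖V.starProjection (e l i)‖}

lemma card_badCells_mul_le (l : ℕ) : #(badCells V l) * ρ ^ (6 * l) ≤ Module.finrank ℝ V := by
  calc #(badCells V l) * ρ ^ (6 * l) ≤ ∑ i ∈ badCells V l, ‖V.starProjection (e l i)‖ ^ 2 := by
        rw [← nsmul_eq_mul]
        refine card_nsmul_le_sum _ _ _ fun i hi => ?_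
        rw [show 6 * l = 3 * l * 2 by ring, pow_mul]
        exact pow_le_pow_left₀ (pow_nonneg ρ_pos.le _) (mem_filter.1 hi).2.le 2
    _ ≤ Module.finrank ℝ V :=
        V.sum_norm_sq_starProjection_le (lp.orthonormal_single.comp _ (Prod.mk_right_injective l)) _

def exceptionalSet (l : ℕ) : Set ℝ :=
  (⋃ i ∈ badCells V l, Ico (i / 2 ^ l) ((i + 1) / 2 ^ l)) ∪
    ⋃ i ∈ range (2 ^ l + 1), Metric.closedBall (i / 2 ^ l) (ρ ^ (9 * l))

lemma measurableSet_exceptionalSet (l : ℕ) : MeasurableSet (exceptionalSet V l) :=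
  .union (.biUnion (to_countable _) fun _ _ => measurableSet_Ico)
    (.biUnion (to_countable _) fun _ _ => measurableSet_closedBall)

lemma volume_exceptionalSet_le (l : ℕ) :
    volume (exceptionalSet V l) ≤ ENNReal.ofReal ((Module.finrank ℝ V + 4) * ρ ^ l) := by
  have hρ := ρ_pos
  have hbad : volume (⋃ i ∈ badCells V l, Ico ((i : ℝ) / 2 ^ l) ((i + 1) / 2 ^ l)) ≤
      ENNReal.ofReal (Module.finrank ℝ V * ρ ^ l) := by
    refine (measure_biUnion_finset_le_card_mul (c := ρ ^ (8 * l)) _ _ fun i _ => ?_).trans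
      (ENNReal.ofReal_le_ofReal ?_)
    · rw [Real.volume_Ico, add_div, add_sub_cancel_left, one_div, ← ρ_pow_eight_mul]
    · calc #(badCells V l) * ρ ^ (8 * l) = #(badCells V l) * ρ ^ (6 * l) * ρ ^ (2 * l) := by ring
        _ ≤ Module.finrank ℝ V * ρ ^ l :=
          mul_le_mul (card_badCells_mul_le V l) (pow_le_pow_of_le_one hρ.le ρ_lt_one.le (by omega))
            (by positivity) (by positivity)
  have hgrid : volume (⋃ i ∈ range (2 ^ l + 1),
      Metric.closedBall ((i : ℝ) / 2 ^ l) (ρ ^ (9 * l))) ≤ ENNReal.ofReal (4 * ρ ^ l) := by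
    refine (measure_biUnion_finset_le_card_mul _ _ fun i _ =>
      (Real.volume_closedBall _ _).le).trans (ENNReal.ofReal_le_ofReal ?_)
    have : (2 : ℝ) ^ l * ρ ^ (8 * l) = 1 := by rw [ρ_pow_eight_mul]; field_simp
    calc (#(range (2 ^ l + 1)) : ℝ) * (2 * ρ ^ (9 * l))
        = (2 ^ l + 1) * ρ ^ (8 * l) * (2 * ρ ^ l) := by push_cast [card_range]; ring
      _ ≤ (2 * 2 ^ l) * ρ ^ (8 * l) * (2 * ρ ^ l) := by
          gcongr; linarith [one_le_pow₀ (M₀ := ℝ) (n := l) one_le_two]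
      _ = 4 * ρ ^ l := by linear_combination (4 * ρ ^ l) * this
  calc volume (exceptionalSet V l) ≤ _ := measure_union_le _ _
    _ ≤ _ := add_le_add hbad hgrid
    _ = _ := by rw [← ENNReal.ofReal_add (by positivity) (by positivity), add_mul]

def goodSet (N : ℕ) : Set ℝ := Icc 0 1 \ ⋃ m, exceptionalSet V (m + N)

lemma measurableSet_goodSet (N : ℕ) : MeasurableSet (goodSet V N) :=
  measurableSet_Icc.diff (.iUnion fun _ => measurableSet_exceptionalSet V _)

lemma volume_Icc_diff_goodSet_le (N : ℕ) :
    volume (Icc 0 1 \ goodSet V N) ≤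
      ENNReal.ofReal ((Module.finrank ℝ V + 4) * ρ ^ N / (1 - ρ)) := by
  have hsum : HasSum (fun m => (Module.finrank ℝ V + 4) * ρ ^ (m + N))
      ((Module.finrank ℝ V + 4) * ρ ^ N / (1 - ρ)) := by
    rw [div_eq_mul_inv]
    exact ((hasSum_geometric_of_lt_one ρ_pos.le ρ_lt_one).mul_left
      ((Module.finrank ℝ V + 4) * ρ ^ N)).congr_fun fun m => by ring
  calc volume (Icc 0 1 \ goodSet V N) ≤ volume (⋃ m, exceptionalSet V (m + N)) := by
        rw [goodSet, Set.sdiff_sdiff_right_self]; exact measure_mono inter_subset_right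
    _ ≤ ∑' m, ENNReal.ofReal ((Module.finrank ℝ V + 4) * ρ ^ (m + N)) :=
        (measure_iUnion_le _).trans (ENNReal.tsum_le_tsum fun m => volume_exceptionalSet_le V _)
    _ = _ := by
        rw [← ENNReal.ofReal_tsum_of_nonneg (fun m => by positivity [ρ_pos]) hsum.summable,
          hsum.tsum_eq]

section goodSet

variable {V} {N l : ℕ} {y s x : ℝ}

lemma not_mem_exceptionalSet (hy : y ∈ goodSet V N) (hl : N ≤ l) : y ∉ exceptionalSet V l := by
  intro hyl
  refine hy.2 (mem_iUnion.2 ⟨l - N, ?_⟩)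
  rwa [Nat.sub_add_cancel hl]

lemma lt_abs_sub_div_of_mem_goodSet (hy : y ∈ goodSet V N) (hl : N ≤ l) {i : ℕ} (hi : i ≤ 2 ^ l) :
    ρ ^ (9 * l) < |y - i / 2 ^ l| := by
  by_contra! h
  exact not_mem_exceptionalSet hy hl <| .inr <|
    mem_biUnion (mem_range.2 (Nat.lt_succ_of_le hi)) (by rwa [Metric.mem_closedBall, Real.dist_eq])

lemma ne_div_of_mem_goodSet (hy : y ∈ goodSet V N) (hl : N ≤ l) {i : ℕ} (hi : i ≤ 2 ^ l) :
    y ≠ i / 2 ^ l := by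
  intro h
  have hsep := lt_abs_sub_div_of_mem_goodSet hy hl hi
  rw [h, sub_self, abs_zero] at hsep
  exact (pow_pos ρ_pos _).not_gt hsep

lemma lt_one_of_mem_goodSet (hy : y ∈ goodSet V N) : y < 1 := by
  refine hy.1.2.lt_of_ne ?_
  simpa using ne_div_of_mem_goodSet hy le_rfl le_rfl

lemma norm_starProjection_le_of_mem_goodSet (hy : y ∈ goodSet V N) (hl : N ≤ l) :
    ‖V.starProjection (e l ⌊(2 : ℝ) ^ l * y⌋₊)‖ ≤ ρ ^ (3 * l) := by
  by_contra! h
  have h2l : (0 : ℝ) < 2 ^ l := by positivity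
  have hy0 : 0 ≤ 2 ^ l * y := mul_nonneg h2l.le hy.1.1
  have hlt : ⌊(2 : ℝ) ^ l * y⌋₊ < 2 ^ l := by
    rw [Nat.floor_lt hy0]; push_cast
    exact mul_lt_of_lt_one_right h2l (lt_one_of_mem_goodSet hy)
  refine not_mem_exceptionalSet hy hl (.inl (mem_biUnion (mem_filter.2 ⟨mem_range.2 hlt, h⟩) ?_))
  rw [Set.mem_Ico, div_le_iff₀ h2l, lt_div_iff₀ h2l, mul_comm y]
  exact ⟨Nat.floor_le hy0, Nat.lt_floor_add_one _⟩

lemma two_mul_lt_sub_of_floor_ne (hs : s ∈ goodSet V N) (hx : x ∈ goodSet V N) (hsx : s ≤ x)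
    (hl : N ≤ l) (hne : ⌊(2 : ℝ) ^ l * s⌋₊ ≠ ⌊(2 : ℝ) ^ l * x⌋₊) :
    2 * ρ ^ (9 * l) < x - s := by
  set m := ⌊(2 : ℝ) ^ l * x⌋₊
  have h2l : (0 : ℝ) < 2 ^ l := by positivity
  have hs0 : 0 ≤ 2 ^ l * s := mul_nonneg h2l.le hs.1.1
  have hsm : s < m / 2 ^ l := by
    rw [lt_div_iff₀ h2l, mul_comm, ← Nat.floor_lt hs0]
    exact (Nat.floor_le_floor (by gcongr)).lt_of_ne hne
  have hmx : m / 2 ^ l ≤ x := by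
    rw [div_le_iff₀ h2l, mul_comm]
    exact Nat.floor_le (hs0.trans (by gcongr))
  have hm : m ≤ 2 ^ l := by
    rw [← Nat.cast_le (α := ℝ), Nat.cast_pow, Nat.cast_ofNat, ← div_le_one h2l]
    exact hmx.trans hx.1.2
  have hsep_s := lt_abs_sub_div_of_mem_goodSet hs hl hm
  have hsep_x := lt_abs_sub_div_of_mem_goodSet hx hl hm
  rw [abs_of_neg (by linarith)] at hsep_s
  rw [abs_of_nonneg (by linarith)] at hsep_x
  linarith

lemma floor_two_pow_mul_eq_of_mem_Icc (hy : y ∈ goodSet V N) {j : ℕ} (hj : j < 2 ^ N)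
    (hyj : y ∈ Icc ((j : ℝ) / 2 ^ N) ((j + 1) / 2 ^ N)) : ⌊(2 : ℝ) ^ N * y⌋₊ = j := by
  have h2N : (0 : ℝ) < 2 ^ N := by positivity
  have hne : y ≠ (j + 1) / 2 ^ N := by exact_mod_cast ne_div_of_mem_goodSet hy le_rfl hj
  rw [Nat.floor_eq_iff (by positivity [hy.1.1]), mul_comm, ← div_le_iff₀ h2N, ← lt_div_iff₀ h2N]
  exact ⟨hyj.1, hyj.2.lt_of_ne hne⟩

end goodSet

section lipschitz

variable {V} {N : ℕ} {s x : ℝ}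

lemma norm_sub_starProjection_term_le (hs : s ∈ goodSet V N) (hx : x ∈ goodSet V N)
    (hsx : s ≤ x) (hN : ⌊(2 : ℝ) ^ N * s⌋₊ = ⌊(2 : ℝ) ^ N * x⌋₊) (k : ℕ) :
    ‖V.starProjection (term x k) - V.starProjection (term s k)‖ ≤ ρ ^ N * ρ ^ k * (x - s) := by
  have hρ := ρ_pos
  have hxs : 0 ≤ x - s := sub_nonneg.2 hsx
  by_cases hk : ⌊(2 : ℝ) ^ (k + 1) * s⌋₊ = ⌊(2 : ℝ) ^ (k + 1) * x⌋₊
  · simp only [term, hk, sub_self, norm_zero]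
    positivity
  have hNk : N ≤ k := by
    by_contra! h
    exact hk (by rw [Nat.floor_two_pow_mul_eq_div (by omega : k + 1 ≤ N), hN,
      ← Nat.floor_two_pow_mul_eq_div (by omega : k + 1 ≤ N)])
  have hsep := two_mul_lt_sub_of_floor_ne hs hx hsx (by omega) hk
  calc ‖V.starProjection (term x k) - V.starProjection (term s k)‖
      = ((2 : ℝ) ^ (k + 1))⁻¹ * ‖V.starProjection (e (k + 1) ⌊(2 : ℝ) ^ (k + 1) * x⌋₊) -
          V.starProjection (e (k + 1) ⌊(2 : ℝ) ^ (k + 1) * s⌋₊)‖ := by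
        rw [term, term, map_smul, map_smul, ← smul_sub, norm_smul,
          Real.norm_of_nonneg (by positivity)]
    _ ≤ ρ ^ (8 * (k + 1)) * (ρ ^ (3 * (k + 1)) + ρ ^ (3 * (k + 1))) := by
        rw [ρ_pow_eight_mul]
        gcongr
        exact norm_sub_le_of_le (norm_starProjection_le_of_mem_goodSet hx (by omega))
          (norm_starProjection_le_of_mem_goodSet hs (by omega))
    _ = ρ ^ (2 * (k + 1)) * (2 * ρ ^ (9 * (k + 1))) := by ring
    _ ≤ ρ ^ (N + k) * (x - s) :=
        mul_le_mul (pow_le_pow_of_le_one hρ.le ρ_lt_one.le (by omega)) hsep.le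
          (by positivity) (by positivity)
    _ = ρ ^ N * ρ ^ k * (x - s) := by rw [pow_add]

lemma dist_starProjection_necklaceMap_le (hs : s ∈ goodSet V N) (hx : x ∈ goodSet V N)
    (hN : ⌊(2 : ℝ) ^ N * s⌋₊ = ⌊(2 : ℝ) ^ N * x⌋₊) :
    dist (V.starProjection (necklaceMap s)) (V.starProjection (necklaceMap x)) ≤
      ρ ^ N / (1 - ρ) * dist s x := by
  wlog hsx : s ≤ x generalizing s x
  · rw [dist_comm, dist_comm s]
    exact this hx hs hN.symm (le_of_not_ge hsx)
  have hsum : HasSum (fun k => ρ ^ N * ρ ^ k * (x - s)) (ρ ^ N / (1 - ρ) * dist s x) := by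
    rw [Real.dist_eq, abs_sub_comm, abs_of_nonneg (sub_nonneg.2 hsx), div_eq_mul_inv]
    exact ((hasSum_geometric_of_lt_one ρ_pos.le ρ_lt_one).mul_left (ρ ^ N)).mul_right (x - s)
  rw [dist_comm, dist_eq_norm, necklaceMap_eq_tsum, necklaceMap_eq_tsum,
    V.starProjection.map_tsum (summable_term x), V.starProjection.map_tsum (summable_term s),
    ← ((summable_term x).mapL V.starProjection).tsum_sub ((summable_term s).mapL V.starProjection)]
  exact tsum_of_norm_bounded hsum (norm_sub_starProjection_term_le hs hx hsx hN)

end lipschitz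

end Necklace

open Necklace

/-- **Piecewise-Lipschitz projections of the self-similar curve.**
For every finite-dimensional subspace `V ≤ ℓ²(ℕ²)` and every `ε > 0`, there is a Borel set
`K ⊆ [0,1]` with `λ([0,1] \ K) ≤ ε` such that `π_V ∘ f` restricted to `K` is piecewise
`ε`-Lipschitz: `[0,1]` decomposes into finitely many intervals on each of which
`π_V ∘ f` restricted to `K` is `ε`-Lipschitz. -/
theorem piecewise_lipschitz_projection
    (V : Submodule ℝ Ell2) [FiniteDimensional ℝ V] (ε : ℝ) (hε : 0 < ε) :
    ∃ K ⊆ Set.Icc (0 : ℝ) 1, MeasurableSet K ∧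
      volume (Set.Icc (0 : ℝ) 1 \ K) ≤ ENNReal.ofReal ε ∧
      ∃ (n : ℕ) (t : Fin (n + 1) → ℝ), Monotone t ∧ t 0 = 0 ∧ t (Fin.last n) = 1 ∧
        ∀ j : Fin n,
          LipschitzOnWith ε.toNNReal
            (fun s => (V.orthogonalProjectionOnto (necklaceMap s) : Ell2))
            (K ∩ Set.Icc (t j.castSucc) (t j.succ)) := by
  have hρ : 0 < 1 - ρ := sub_pos.2 ρ_lt_one
  obtain ⟨N, hN⟩ : ∃ N : ℕ, (Module.finrank ℝ V + 4) * ρ ^ N / (1 - ρ) ≤ ε := by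
    obtain ⟨N, hN⟩ := exists_pow_lt_of_lt_one
      (show 0 < ε * (1 - ρ) / (Module.finrank ℝ V + 4) by positivity) ρ_lt_one
    refine ⟨N, ?_⟩
    rw [div_le_iff₀ hρ, ← le_div_iff₀' (by positivity)]
    exact hN.le
  have hL : ρ ^ N / (1 - ρ) ≤ ε := by
    refine le_trans ?_ hN
    rw [mul_div_assoc]
    exact le_mul_of_one_le_left (by positivity [ρ_pos]) (by linarith)
  refine ⟨goodSet V N, sdiff_subset, measurableSet_goodSet V N,
    (volume_Icc_diff_goodSet_le V N).trans (ENNReal.ofReal_le_ofReal hN),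
    2 ^ N, fun j => (j : ℝ) / 2 ^ N,
    fun i j hij => div_le_div_of_nonneg_right (by exact_mod_cast hij) (by positivity), by simp,
    by simp,
    fun j => LipschitzOnWith.of_dist_le_mul fun s hs x hx => ?_⟩
  have hfloor {y : ℝ} (hy : y ∈ goodSet V N)
      (hyj : y ∈ Icc (((j.castSucc : ℕ) : ℝ) / 2 ^ N) (((j.succ : ℕ) : ℝ) / 2 ^ N)) :
      ⌊(2 : ℝ) ^ N * y⌋₊ = j :=
    floor_two_pow_mul_eq_of_mem_Icc hy j.isLt (by simpa using hyj)
  calc _ ≤ ρ ^ N / (1 - ρ) * dist s x :=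
        dist_starProjection_necklaceMap_le hs.1 hx.1
          ((hfloor hs.1 hs.2).trans (hfloor hx.1 hx.2).symm)
    _ ≤ ε.toNNReal * dist s x := by
        rw [Real.coe_toNNReal _ hε.le]
        gcongr

end
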